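/- Let * be a continuous t-norm and let φ, ξ be distance distributions. Then there exists a distance distribution ψ with φ ⊗ ψ = ξ (i.e., ξ is a diagonal on φ in the quantale of distance distributions) if and only if ξ(t) = sup_{s<t} inf_{q>0} φ(t−s) * (φ(q) →* ξ(q+s)) for every t ∈ [0,∞) (i.e., for every finite t). -/

import Mathlib

/-! `ψ₀ s = convResidual T φ ξ s = ⨅ q > 0, φ q →* ξ (q + s)` is the largest `ψ` with
`φ ⊗ ψ ≤ ξ`, and since `*` is continuous the right-hand side of the characterization is
`⨆ s < t, φ (t - s) * ψ₀ s`, which never exceeds `ξ t`. If `ξ = φ ⊗ ψ`, writing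
`ψ s = ⨆ s' < s, ψ s'` bounds every term `φ r * ψ s` of the convolution by that supremum.
Conversely, `ψ₀` need not be left continuous, but its left-continuous regularization `lower ψ₀`
still has `φ ⊗ lower ψ₀ ≤ ξ`, and writing `φ (t - s) = ⨆ r < t - s, φ r` shows it dominates the
right-hand side, hence `ξ`, at every finite `t`; at `∞` both sides are determined by their finite
values. -/

open unitInterval
open scoped ENNReal

noncomputable section

instance : Fact ((0:ℝ) ≤ 1) := ⟨zero_le_one⟩

/-- A distance distribution: a map `φ : [0,∞] → [0,1]` with `φ t = ⨆ s < t, φ s`. -/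
def DistDistr (φ : ℝ≥0∞ → I) : Prop :=
  ∀ t, φ t = ⨆ (s : ℝ≥0∞) (_ : s < t), φ s

/-- The one-step function `κ_{p,a}`. -/
def kappa (p : ℝ≥0∞) (a : I) : ℝ≥0∞ → I :=
  fun t => if t ≤ p then 0 else a

/-- A continuous t-norm on `[0,1]`. -/
structure ContinuousTNorm where
  mul : I → I → I
  continuous' : Continuous fun p : I × I => mul p.1 p.2
  comm : ∀ a b, mul a b = mul b a
  assoc : ∀ a b c, mul (mul a b) c = mul a (mul b c)
  mono : ∀ a, Monotone (mul a)
  mul_one : ∀ a, mul a 1 = a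

/-- The residual `a →* b` of a continuous t-norm. -/
def ContinuousTNorm.residual (T : ContinuousTNorm) (a b : I) : I :=
  sSup {c | T.mul a c ≤ b}

/-- Convolution of maps `[0,∞] → [0,1]` w.r.t. a continuous t-norm. -/
def conv (T : ContinuousTNorm) (φ ψ : ℝ≥0∞ → I) : ℝ≥0∞ → I :=
  fun t => ⨆ (r : ℝ≥0∞) (s : ℝ≥0∞) (_ : r + s = t), T.mul (φ r) (ψ s)

/-- `φ⁻ t = ⨆ s < t, φ s`. -/
def lower (φ : ℝ≥0∞ → I) : ℝ≥0∞ → I :=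
  fun t => ⨆ (s : ℝ≥0∞) (_ : s < t), φ s

namespace ContinuousTNorm

variable (T : ContinuousTNorm)

theorem continuous_mul_left (a : I) : Continuous (T.mul a) :=
  T.continuous'.comp (continuous_const.prodMk continuous_id)

theorem mul_le_mul {a b c d : I} (hac : a ≤ c) (hbd : b ≤ d) : T.mul a b ≤ T.mul c d :=
  calc T.mul a b ≤ T.mul a d := T.mono a hbd
    _ = T.mul d a := T.comm a d
    _ ≤ T.mul d c := T.mono d hac
    _ = T.mul c d := T.comm d c

theorem mul_zero (a : I) : T.mul a 0 = 0 := by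
  refine le_antisymm ?_ unitInterval.nonneg'
  calc T.mul a 0 ≤ T.mul 1 0 := T.mul_le_mul unitInterval.le_one' le_rfl
    _ = 0 := by rw [T.comm, T.mul_one]

theorem mul_iSup {ι : Sort*} (a : I) (f : ι → I) : T.mul a (⨆ i, f i) = ⨆ i, T.mul a (f i) :=
  (T.mono a).map_iSup_of_continuousAt (T.continuous_mul_left a).continuousAt (T.mul_zero a)

theorem mul_biSup {α : Type*} (p : α → Prop) (a : I) (f : α → I) :
    T.mul a (⨆ (x) (_ : p x), f x) = ⨆ (x) (_ : p x), T.mul a (f x) := by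
  simp only [T.mul_iSup]

theorem mul_iInf {ι : Sort*} [Nonempty ι] (a : I) (f : ι → I) :
    T.mul a (⨅ i, f i) = ⨅ i, T.mul a (f i) :=
  (T.mono a).map_ciInf_of_continuousAt (T.continuous_mul_left a).continuousAt

theorem le_residual {a b c : I} (h : T.mul a c ≤ b) : c ≤ T.residual a b :=
  le_sSup h

theorem mul_residual_le (a b : I) : T.mul a (T.residual a b) ≤ b := by
  rw [residual, sSup_eq_iSup', T.mul_iSup]
  exact iSup_le fun c => c.2

end ContinuousTNorm

theorem DistDistr.monotone {φ : ℝ≥0∞ → I} (hφ : DistDistr φ) : Monotone φ := by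
  intro s t hst
  rw [hφ s, hφ t]
  exact biSup_mono fun r hr => hr.trans_le hst

theorem DistDistr.map_zero {φ : ℝ≥0∞ → I} (hφ : DistDistr φ) : φ 0 = 0 := by
  rw [hφ 0]
  simp only [ENNReal.not_lt_zero, iSup_false, iSup_const]
  rfl

theorem distDistr_lower (φ : ℝ≥0∞ → I) : DistDistr (lower φ) := by
  intro t
  refine le_antisymm (iSup₂_le fun s hst => ?_) (iSup₂_le fun s hst => ?_)
  · obtain ⟨u, hsu, hut⟩ := exists_between hst
    exact le_iSup₂_of_le u hut (le_iSup₂_of_le s hsu le_rfl)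
  · exact biSup_mono fun r hrs => hrs.trans hst

theorem DistDistr.le_of_forall_lt_top {ξ η : ℝ≥0∞ → I} (hξ : DistDistr ξ) (hη : Monotone η)
    (h : ∀ t < ∞, ξ t ≤ η t) : ξ ≤ η := by
  intro t
  rw [hξ t]
  exact iSup₂_le fun s hst => (h s (hst.trans_le le_top)).trans (hη hst.le)

section Convolution

variable (T : ContinuousTNorm)

theorem le_conv (φ ψ : ℝ≥0∞ → I) (r s : ℝ≥0∞) : T.mul (φ r) (ψ s) ≤ conv T φ ψ (r + s) :=
  le_iSup₂_of_le r s (le_iSup_of_le rfl le_rfl)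

theorem conv_le_iff {φ ψ ξ : ℝ≥0∞ → I} :
    conv T φ ψ ≤ ξ ↔ ∀ r s, T.mul (φ r) (ψ s) ≤ ξ (r + s) := by
  refine ⟨fun h r s => (le_conv T φ ψ r s).trans (h _), fun h t => ?_⟩
  exact iSup₂_le fun r s => iSup_le fun hrs => hrs ▸ h r s

theorem monotone_conv (φ : ℝ≥0∞ → I) {ψ : ℝ≥0∞ → I} (hψ : Monotone ψ) :
    Monotone (conv T φ ψ) := by
  intro t t' htt'
  refine iSup₂_le fun r s => iSup_le fun hrs => ?_
  calc T.mul (φ r) (ψ s) ≤ T.mul (φ r) (ψ (s + (t' - t))) := T.mono _ (hψ le_self_add)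
    _ ≤ conv T φ ψ (r + (s + (t' - t))) := le_conv T φ ψ _ _
    _ = conv T φ ψ t' := by rw [← add_assoc, hrs, add_tsub_cancel_of_le htt']

def convResidual (φ ξ : ℝ≥0∞ → I) : ℝ≥0∞ → I :=
  fun s => ⨅ (q : ℝ≥0∞) (_ : 0 < q), T.residual (φ q) (ξ (q + s))

theorem le_convResidual_of_conv_le {φ ψ ξ : ℝ≥0∞ → I} (h : conv T φ ψ ≤ ξ) :
    ψ ≤ convResidual T φ ξ :=
  fun s => le_iInf₂ fun q _ => T.le_residual ((conv_le_iff T).1 h q s)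

theorem mul_convResidual_le {φ : ℝ≥0∞ → I} (hφ : φ 0 = 0) (ξ : ℝ≥0∞ → I) (r s : ℝ≥0∞) :
    T.mul (φ r) (convResidual T φ ξ s) ≤ ξ (r + s) := by
  rcases eq_zero_or_pos r with rfl | hr
  · rw [hφ, T.comm, T.mul_zero]
    exact unitInterval.nonneg'
  · exact (T.mono _ (iInf₂_le r hr)).trans (T.mul_residual_le _ _)

theorem conv_lower_convResidual_le {φ ξ : ℝ≥0∞ → I} (hφ : φ 0 = 0) (hξ : Monotone ξ) :
    conv T φ (lower (convResidual T φ ξ)) ≤ ξ := by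
  refine (conv_le_iff T).2 fun r s => ?_
  rw [lower, T.mul_biSup]
  exact iSup₂_le fun s' hs' =>
    (mul_convResidual_le T hφ ξ r s').trans (hξ (add_le_add_right hs'.le r))

theorem biSup_mul_convResidual_eq (φ ξ : ℝ≥0∞ → I) (t : ℝ≥0∞) :
    ⨆ (s : ℝ≥0∞) (_ : s < t), T.mul (φ (t - s)) (convResidual T φ ξ s) =
      ⨆ (s : ℝ≥0∞) (_ : s < t), ⨅ (q : ℝ≥0∞) (_ : 0 < q),
        T.mul (φ (t - s)) (T.residual (φ q) (ξ (q + s))) := by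
  have : Nonempty {q : ℝ≥0∞ // 0 < q} := ⟨⟨1, one_pos⟩⟩
  simp only [convResidual, iInf_subtype', T.mul_iInf]

theorem biSup_mul_convResidual_le {φ : ℝ≥0∞ → I} (hφ : φ 0 = 0) (ξ : ℝ≥0∞ → I) (t : ℝ≥0∞) :
    ⨆ (s : ℝ≥0∞) (_ : s < t), T.mul (φ (t - s)) (convResidual T φ ξ s) ≤ ξ t := by
  refine iSup₂_le fun s hst => ?_
  simpa only [tsub_add_cancel_of_le hst.le] using mul_convResidual_le T hφ ξ (t - s) s

theorem conv_le_biSup_mul_convResidual {φ ψ : ℝ≥0∞ → I} (hφ : Monotone φ) (hψ : DistDistr ψ)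
    (t : ℝ≥0∞) :
    conv T φ ψ t ≤
      ⨆ (s : ℝ≥0∞) (_ : s < t), T.mul (φ (t - s)) (convResidual T φ (conv T φ ψ) s) := by
  refine iSup₂_le fun r s => iSup_le fun hrs => ?_
  rw [hψ s, T.mul_biSup]
  refine iSup₂_le fun s' hs' => ?_
  have hs't : s' < t := hrs ▸ hs'.trans_le le_add_self
  have hr : r ≤ t - s' :=
    ENNReal.le_sub_of_add_le_right hs't.ne_top (hrs ▸ add_le_add_right hs'.le r)
  exact le_iSup₂_of_le s' hs't
    (T.mul_le_mul (hφ hr) (le_convResidual_of_conv_le T le_rfl s'))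

theorem biSup_mul_le_conv_lower {φ : ℝ≥0∞ → I} (hφ : DistDistr φ) (f : ℝ≥0∞ → I) (t : ℝ≥0∞) :
    ⨆ (s : ℝ≥0∞) (_ : s < t), T.mul (φ (t - s)) (f s) ≤ conv T φ (lower f) t := by
  refine iSup₂_le fun s hst => ?_
  rw [hφ (t - s), T.comm, T.mul_biSup]
  refine iSup₂_le fun r hr => ?_
  have hrs : s < t - r := lt_tsub_iff_left.2 (lt_tsub_iff_right.1 hr)
  calc T.mul (f s) (φ r) = T.mul (φ r) (f s) := T.comm _ _
    _ ≤ T.mul (φ r) (lower f (t - r)) := T.mono _ (le_iSup₂_of_le s hrs le_rfl)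
    _ ≤ conv T φ (lower f) (r + (t - r)) := le_conv T φ _ _ _
    _ = conv T φ (lower f) t := by rw [add_tsub_cancel_of_le (hr.le.trans tsub_le_self)]

end Convolution

/-- `ξ` is a diagonal on `φ` (i.e. `ξ = φ ⊗ ψ` for some distance
distribution `ψ`) iff `ξ t = ⨆ s < t, ⨅ q > 0, φ (t - s) * (φ q →* ξ (q + s))`
for every finite `t`. -/
theorem stmt_14 (T : ContinuousTNorm) (φ ξ : ℝ≥0∞ → I) (hφ : DistDistr φ) (hξ : DistDistr ξ) :
    (∃ ψ : ℝ≥0∞ → I, DistDistr ψ ∧ conv T φ ψ = ξ) ↔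
      ∀ t : ℝ≥0∞, t ≠ ∞ →
        ξ t = ⨆ (s : ℝ≥0∞) (_ : s < t), ⨅ (q : ℝ≥0∞) (_ : 0 < q),
          T.mul (φ (t - s)) (T.residual (φ q) (ξ (q + s))) := by
  constructor
  · rintro ⟨ψ, hψ, rfl⟩ t -
    rw [← biSup_mul_convResidual_eq]
    exact le_antisymm (conv_le_biSup_mul_convResidual T hφ.monotone hψ t)
      (biSup_mul_convResidual_le T hφ.map_zero _ t)
  · intro h
    have hψ := distDistr_lower (convResidual T φ ξ)
    refine ⟨_, hψ, le_antisymm (conv_lower_convResidual_le T hφ.map_zero hξ.monotone) ?_⟩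
    refine hξ.le_of_forall_lt_top (monotone_conv T φ hψ.monotone) fun t ht => ?_
    rw [h t ht.ne, ← biSup_mul_convResidual_eq]
    exact biSup_mul_le_conv_lower T hφ _ t
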